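/- arXiv:1710.05250 — 2 statements merged into one kernel-verified Lean document; each statement's English description precedes it below -/
import Mathlib

section
/- Let G be a (2n−2)-regular graph on 2n vertices. Then every semigroup S whose commuting graph is isomorphic to G requires at least 2n generators; i.e., rank(G) = 2n. -/
/-!
In a (2n−2)-regular graph on 2n vertices every vertex has exactly one non-neighbour. If the
commuting graph of `S` has this shape, no non-central `x` factors as `x = a * b` with
`a, b ≠ x`: let `w` be the unique element not commuting with `x`; then one of `a, b` does not
commute with `w`, so it is non-central and, by uniqueness for `w`, equal to `x`. Hence every
generating set contains all 2n non-central elements.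

Conversely, orient the non-edges of `G` by a linear order and form the semigroup on
`V ∪ {apex, zero}` with `u * v = apex` along oriented non-edges and all other products `zero`.
Two vertices then commute iff they are adjacent, so its commuting graph is `G`, and it is
generated by `V`.
-/

/-- The commuting graph of a semigroup: vertices are the non-central
elements, two distinct vertices are adjacent iff they commute. -/
def CommutingGraph (S : Type*) [Semigroup S] :
    SimpleGraph {x : S // x ∉ Set.center S} where
  Adj a b := a ≠ b ∧ (a : S) * b = (b : S) * a
  symm := ⟨fun _ _ ⟨h, hc⟩ => ⟨h.symm, hc.symm⟩⟩
  loopless := ⟨fun _ ⟨h, _⟩ => h rfl⟩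

open SimpleGraph

theorem SimpleGraph.existsUnique_compl_adj_of_isRegularOfDegree {V : Type*} [Fintype V]
    {G : SimpleGraph V} [DecidableRel G.Adj] (hV : 2 ≤ Fintype.card V)
    (hG : G.IsRegularOfDegree (Fintype.card V - 2)) (v : V) : ∃! w, Gᶜ.Adj v w := by
  classical
  rw [← degree_eq_one_iff_existsUnique_adj, degree_compl, hG v]
  omega

theorem SimpleGraph.Iso.compl_adj_iff {V W : Type*} {G : SimpleGraph V} {H : SimpleGraph W}
    (e : G ≃g H) {a b : V} : Hᶜ.Adj (e a) (e b) ↔ Gᶜ.Adj a b := by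
  simp [compl_adj, e.injective.ne_iff, e.map_adj_iff]

theorem SimpleGraph.Iso.existsUnique_compl_adj {V W : Type*} {G : SimpleGraph V}
    {H : SimpleGraph W} (e : G ≃g H) (hH : ∀ v, ∃! w, Hᶜ.Adj v w) (v : V) :
    ∃! w, Gᶜ.Adj v w :=
  (e.toEquiv.existsUnique_congr fun _ => e.compl_adj_iff.symm).2 (hH (e v))

theorem Subsemigroup.compl_center_subset_of_closure_eq_top {S : Type*} [Semigroup S]
    (hS : ∀ a b : S, a * b ∉ Set.center S → a = a * b ∨ b = a * b)
    {s : Set S} (hs : closure s = ⊤) : (Set.center S)ᶜ ⊆ s := by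
  intro x hx
  have hx' : x ∈ closure s := hs ▸ trivial
  refine (closure_induction (p := fun x _ => x ∈ Set.center S ∨ x ∈ s)
    (fun x hx => Or.inr hx) ?_ hx').resolve_left hx
  intro a b _ _ ha hb
  by_cases hab : a * b ∈ Set.center S
  · exact Or.inl hab
  · rcases hS a b hab with h | h
    · exact h ▸ ha
    · exact h ▸ hb

namespace CommutingGraph

variable {S : Type*} [Semigroup S]

theorem adj_iff {a b : {x : S // x ∉ Set.center S}} :
    (CommutingGraph S).Adj a b ↔ a ≠ b ∧ Commute (a : S) b :=
  Iff.rfl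

theorem compl_adj_iff {a b : {x : S // x ∉ Set.center S}} :
    (CommutingGraph S)ᶜ.Adj a b ↔ ¬Commute (a : S) b := by
  refine ⟨fun h hab => h.2 ⟨h.1, hab⟩, fun h => ⟨?_, fun hab => h hab.2⟩⟩
  rintro rfl
  exact h (Commute.refl _)

theorem eq_or_eq_of_mul_notMem_center (hS : ∀ u, ∃! w, (CommutingGraph S)ᶜ.Adj u w)
    {a b : S} (hab : a * b ∉ Set.center S) : a = a * b ∨ b = a * b := by
  let x : {x : S // x ∉ Set.center S} := ⟨a * b, hab⟩
  obtain ⟨w, hxw, -⟩ := hS x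
  obtain ⟨_, -, hw⟩ := hS w
  have eq_of_not_commute (c : S) (hc : ¬Commute c w) : c = a * b := by
    have hc' : c ∉ Set.center S := fun hcen =>
      hc ((Semigroup.mem_center_iff.1 hcen) w).symm
    have hcw : (CommutingGraph S)ᶜ.Adj w ⟨c, hc'⟩ := compl_adj_iff.2 fun h => hc h.symm
    exact congrArg Subtype.val ((hw _ hcw).trans (hw x hxw.symm).symm)
  by_cases ha : Commute a w
  · exact .inr (eq_of_not_commute b fun hb => compl_adj_iff.1 hxw (ha.mul_left hb))
  · exact .inl (eq_of_not_commute a ha)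

theorem card_le_of_closure_eq_top (hS : ∀ u, ∃! w, (CommutingGraph S)ᶜ.Adj u w)
    {gens : Finset S} (hgens : Subsemigroup.closure (gens : Set S) = ⊤) :
    Nat.card {x : S // x ∉ Set.center S} ≤ gens.card := by
  rw [← Set.ncard_coe_finset]
  exact Set.ncard_le_ncard (Subsemigroup.compl_center_subset_of_closure_eq_top
    (fun _ _ => eq_or_eq_of_mul_notMem_center hS) hgens) gens.finite_toSet

end CommutingGraph

/-- The semigroup `V ∪ {apex, zero}` in which `of u * of v = apex` when `r u v` and every other
product is `zero`; all products of three elements vanish. -/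
inductive NilSemigroup {V : Type*} (r : V → V → Prop)
  | zero
  | apex
  | of (v : V)

namespace NilSemigroup

variable {V : Type*} {r : V → V → Prop} [DecidableRel r]

instance : Mul (NilSemigroup r) where
  mul
    | of u, of v => if r u v then apex else zero
    | _, _ => zero

theorem of_mul_of (u v : V) : (of u * of v : NilSemigroup r) = if r u v then apex else zero :=
  rfl

theorem mul_zero' (a : NilSemigroup r) : a * zero = zero := by
  cases a <;> rfl

theorem zero_mul' (a : NilSemigroup r) : zero * a = zero :=
  rfl

theorem mul_apex (a : NilSemigroup r) : a * apex = zero := by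
  cases a <;> rfl

theorem apex_mul (a : NilSemigroup r) : apex * a = zero :=
  rfl

theorem mul_mul_eq_zero (a b c : NilSemigroup r) : a * b * c = zero := by
  cases a <;> cases b <;> try rfl
  rw [of_mul_of]
  split_ifs
  exacts [apex_mul c, zero_mul' c]

theorem mul_mul_eq_zero' (a b c : NilSemigroup r) : a * (b * c) = zero := by
  cases b <;> cases c <;> try exact mul_zero' a
  rw [of_mul_of]
  split_ifs
  exacts [mul_apex a, mul_zero' a]

instance : Semigroup (NilSemigroup r) where
  mul_assoc a b c := (mul_mul_eq_zero a b c).trans (mul_mul_eq_zero' a b c).symm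

theorem zero_mem_center : (zero : NilSemigroup r) ∈ Set.center (NilSemigroup r) :=
  Semigroup.mem_center_iff.2 fun a => (mul_zero' a).trans (zero_mul' a).symm

theorem apex_mem_center : (apex : NilSemigroup r) ∈ Set.center (NilSemigroup r) :=
  Semigroup.mem_center_iff.2 fun a => (mul_apex a).trans (apex_mul a).symm

theorem commute_of_of_iff {u v : V} :
    Commute (of u : NilSemigroup r) (of v) ↔ (r u v ↔ r v u) := by
  change (of u * of v : NilSemigroup r) = of v * of u ↔ _
  rw [of_mul_of, of_mul_of]
  split_ifs <;> simp_all

theorem closure_range_of_eq_top (h₀ : ∃ u v, ¬r u v) (h₁ : ∃ u v, r u v) :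
    Subsemigroup.closure (Set.range (of : V → NilSemigroup r)) = ⊤ := by
  obtain ⟨u₀, v₀, h₀⟩ := h₀
  obtain ⟨u₁, v₁, h₁⟩ := h₁
  refine eq_top_iff.2 fun a _ => ?_
  have hof (v : V) : of v ∈ Subsemigroup.closure (Set.range (of : V → NilSemigroup r)) :=
    Subsemigroup.subset_closure ⟨v, rfl⟩
  cases a with
  | zero => simpa [of_mul_of, h₀] using mul_mem (hof u₀) (hof v₀)
  | apex => simpa [of_mul_of, h₁] using mul_mem (hof u₁) (hof v₁)
  | of v => exact hof v

end NilSemigroup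

namespace SimpleGraph

variable {V : Type*} [LinearOrder V] (G : SimpleGraph V)

def nonAdjLT (u v : V) : Prop := ¬G.Adj u v ∧ u < v

instance [DecidableRel G.Adj] : DecidableRel G.nonAdjLT :=
  fun u v => inferInstanceAs (Decidable (¬G.Adj u v ∧ u < v))

variable {G}

theorem nonAdjLT_or_nonAdjLT {u v : V} (h : Gᶜ.Adj u v) : G.nonAdjLT u v ∨ G.nonAdjLT v u := by
  obtain ⟨hne, hadj⟩ := h
  rcases hne.lt_or_gt with huv | hvu
  exacts [.inl ⟨hadj, huv⟩, .inr ⟨fun h => hadj h.symm, hvu⟩]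

variable [DecidableRel G.Adj]

theorem commute_of_of_iff {u v : V} :
    Commute (NilSemigroup.of u : NilSemigroup G.nonAdjLT) (.of v) ↔ u = v ∨ G.Adj u v := by
  rw [NilSemigroup.commute_of_of_iff]
  unfold nonAdjLT
  rcases lt_trichotomy u v with h | rfl | h
  · simp [h, h.ne, h.not_gt]
  · simp
  · simp [h, h.ne', h.not_gt, G.adj_comm]

theorem of_notMem_center {u : V} (hu : ∃ w, Gᶜ.Adj u w) :
    (NilSemigroup.of u : NilSemigroup G.nonAdjLT) ∉ Set.center (NilSemigroup G.nonAdjLT) := by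
  obtain ⟨w, hne, hadj⟩ := hu
  intro hu
  rcases commute_of_of_iff.1 (Semigroup.mem_center_iff.1 hu (.of w)) with h | h
  exacts [hne h.symm, hadj h.symm]

variable (G)

noncomputable def commutingGraphIso (hG : ∀ v, ∃ w, Gᶜ.Adj v w) :
    G ≃g CommutingGraph (NilSemigroup G.nonAdjLT) where
  toEquiv := Equiv.ofBijective (fun v => ⟨.of v, of_notMem_center (hG v)⟩) <| by
    refine ⟨fun u v h => NilSemigroup.of.inj (congrArg Subtype.val h), ?_⟩
    rintro ⟨_ | _ | v, hx⟩
    exacts [(hx NilSemigroup.zero_mem_center).elim, (hx NilSemigroup.apex_mem_center).elim,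
      ⟨v, rfl⟩]
  map_rel_iff' {u v} := by
    change (CommutingGraph (NilSemigroup G.nonAdjLT)).Adj ⟨.of u, of_notMem_center (hG u)⟩
      ⟨.of v, of_notMem_center (hG v)⟩ ↔ G.Adj u v
    rw [CommutingGraph.adj_iff]
    simp only [ne_eq, Subtype.mk.injEq, NilSemigroup.of.injEq, commute_of_of_iff]
    exact ⟨fun h => h.2.resolve_left h.1, fun h => ⟨h.ne, .inr h⟩⟩

end SimpleGraph

theorem rank_of_regular_graph (n : ℕ) (hn : 1 ≤ n) {V : Type} [Fintype V]
    (G : SimpleGraph V) [DecidableRel G.Adj]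
    (hcardV : Fintype.card V = 2 * n)
    (hreg : ∀ v : V, G.degree v = 2 * n - 2) :
    (∀ (S : Type) (inst : Semigroup S),
      Nonempty (@CommutingGraph S inst ≃g G) →
      ∀ gens : Finset S, Subsemigroup.closure (gens : Set S) = ⊤ →
        2 * n ≤ gens.card) ∧
    ∃ (S : Type) (inst : Semigroup S) (gens : Finset S),
      gens.card = 2 * n ∧ Subsemigroup.closure (gens : Set S) = ⊤ ∧
      Nonempty (@CommutingGraph S inst ≃g G) := by
  have hpartner : ∀ v, ∃! w, Gᶜ.Adj v w :=
    existsUnique_compl_adj_of_isRegularOfDegree (by omega) (by rwa [hcardV])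
  refine ⟨fun S _ ⟨e⟩ gens hgens => ?_, ?_⟩
  · calc 2 * n = Nat.card V := by rw [Nat.card_eq_fintype_card, hcardV]
      _ = Nat.card {x : S // x ∉ Set.center S} := (Nat.card_congr e.toEquiv).symm
      _ ≤ gens.card :=
        CommutingGraph.card_le_of_closure_eq_top (e.existsUnique_compl_adj hpartner) hgens
  · let : LinearOrder V := LinearOrder.lift' _ (Fintype.equivFin V).injective
    obtain ⟨v₀⟩ : Nonempty V := Fintype.card_pos_iff.1 (by omega)
    obtain ⟨w₀, hw₀, -⟩ := hpartner v₀
    refine ⟨NilSemigroup G.nonAdjLT, inferInstance,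
      Finset.univ.map ⟨.of, fun _ _ => NilSemigroup.of.inj⟩, by simp [hcardV], ?_,
      ⟨(G.commutingGraphIso fun v => (hpartner v).exists).symm⟩⟩
    rw [Finset.coe_map, Finset.coe_univ, Set.image_univ]
    refine NilSemigroup.closure_range_of_eq_top ⟨v₀, v₀, fun h => h.2.false⟩ ?_
    rcases nonAdjLT_or_nonAdjLT hw₀ with h | h
    exacts [⟨_, _, h⟩, ⟨_, _, h⟩]
end

section
/- Every semigroup S whose commuting graph is isomorphic to the 4-cycle C₄ requires at least 4 generators; i.e., rank(C₄) = 4. -/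
/-!
An element commuting with every generator of a semigroup is central, so each non-central `x` has a
generator among its non-neighbours in the commuting graph. In `C₄` every vertex `i` has exactly
one non-neighbour, `i + 2`, and `i` is in turn the only non-neighbour of `i + 2`; so all four
non-central elements must be generators. Conversely, the
0-direct union of two two-element left-zero semigroups has commuting graph `C₄` and is generated by
its four non-zero elements.
-/

namespace Subsemigroup

variable {M : Type*} [Semigroup M]

theorem centralizer_eq_center_of_closure_eq_top {s : Set M} (hs : closure s = ⊤) :
    centralizer s = center M := by
  refine le_antisymm (fun x hx => mem_center_iff.2 fun g => ?_) (center_le_centralizer s)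
  have hg : g ∈ centralizer (centralizer s : Set M) :=
    closure_le_centralizer_centralizer s (hs ▸ mem_top g)
  exact (mem_centralizer_iff.1 hg x hx).symm

end Subsemigroup

namespace SimpleGraph

variable {V : Type*} {G : SimpleGraph V}

theorem forall_mem_of_forall_exists_adj_mem (hG : ∀ ⦃x y z⦄, G.Adj x y → G.Adj x z → y = z)
    {T : Set V} (hT : ∀ x, ∃ y, G.Adj x y ∧ y ∈ T) (v : V) : v ∈ T := by
  obtain ⟨y, hvy, -⟩ := hT v
  obtain ⟨z, hyz, hzT⟩ := hT y
  exact hG hyz hvy.symm ▸ hzT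

theorem cycleGraph_four_compl_adj_iff (i j : Fin 4) :
    (cycleGraph 4)ᶜ.Adj i j ↔ j = i + 2 := by
  revert i j
  decide

end SimpleGraph

open SimpleGraph

namespace CommutingGraph

variable {S : Type*} [Semigroup S]

theorem exists_compl_adj_mem_of_closure_eq_top {s : Set S} (hs : Subsemigroup.closure s = ⊤)
    (x : {x : S // x ∉ Set.center S}) : ∃ y, (CommutingGraph S)ᶜ.Adj x y ∧ (y : S) ∈ s := by
  have hx : (x : S) ∉ Subsemigroup.centralizer s := by
    rw [Subsemigroup.centralizer_eq_center_of_closure_eq_top hs]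
    exact x.2
  obtain ⟨g, hgs, hgx⟩ := not_forall₂.1 (mt Subsemigroup.mem_centralizer_iff.2 hx)
  have hg : g ∉ Set.center S := fun hg => hgx (Semigroup.mem_center_iff.1 hg x).symm
  exact ⟨⟨g, hg⟩, (compl_adj _ _ _).2 ⟨fun h => hgx (by subst h; rfl), fun h => hgx h.2.symm⟩, hgs⟩

theorem card_nonCentral_le_card_of_closure_eq_top
    (hG : ∀ ⦃x y z⦄, (CommutingGraph S)ᶜ.Adj x y → (CommutingGraph S)ᶜ.Adj x z → y = z)
    {gens : Finset S} (hgens : Subsemigroup.closure (gens : Set S) = ⊤) :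
    Nat.card {x : S // x ∉ Set.center S} ≤ gens.card := by
  have hmem : ∀ x : {x : S // x ∉ Set.center S}, (x : S) ∈ gens :=
    forall_mem_of_forall_exists_adj_mem hG (exists_compl_adj_mem_of_closure_eq_top hgens)
  calc Nat.card {x : S // x ∉ Set.center S}
      ≤ Nat.card gens := Nat.card_le_card_of_injective (fun x => ⟨x, hmem x⟩)
        fun x y h => Subtype.ext (congrArg Subtype.val h :)
    _ = gens.card := Nat.card_eq_finsetCard gens

theorem four_le_card_of_closure_eq_top (e : CommutingGraph S ≃g cycleGraph 4) {gens : Finset S}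
    (hgens : Subsemigroup.closure (gens : Set S) = ⊤) : 4 ≤ gens.card := by
  have hG : ∀ ⦃x y z⦄, (CommutingGraph S)ᶜ.Adj x y → (CommutingGraph S)ᶜ.Adj x z → y = z := by
    intro x y z hxy hxz
    simp only [compl_adj, ← e.map_adj_iff, e.injective.ne_iff.symm] at hxy hxz
    rw [← compl_adj, cycleGraph_four_compl_adj_iff] at hxy hxz
    exact e.injective (hxy.trans hxz.symm)
  calc 4 = Nat.card {x : S // x ∉ Set.center S} := by rw [Nat.card_congr e.toEquiv, Nat.card_fin]
    _ ≤ gens.card := card_nonCentral_le_card_of_closure_eq_top hG hgens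

end CommutingGraph

/-- The 0-direct union, with zero `none`, of the two left-zero semigroups
`{some (i, true), some (i, false)}`, `i : Bool`. -/
def C4Semigroup : Type := Option (Bool × Bool)

namespace C4Semigroup

instance : DecidableEq C4Semigroup := inferInstanceAs (DecidableEq (Option (Bool × Bool)))

instance : Fintype C4Semigroup := inferInstanceAs (Fintype (Option (Bool × Bool)))

instance : Mul C4Semigroup where
  mul
    | some (i, a), some (j, _) => if i = j then some (i, a) else none
    | _, _ => none

instance : Semigroup C4Semigroup where
  mul_assoc := by decide

instance : DecidablePred (· ∈ Set.center C4Semigroup) := fun _ =>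
  decidable_of_iff _ Semigroup.mem_center_iff.symm

instance : DecidableRel (CommutingGraph C4Semigroup).Adj := fun a b =>
  inferInstanceAs (Decidable (a ≠ b ∧ _))

def cycleVertex : Fin 4 → C4Semigroup :=
  ![some (true, true), some (false, true), some (true, false), some (false, false)]

theorem cycleVertex_not_mem_center : ∀ i, cycleVertex i ∉ Set.center C4Semigroup := by
  decide

noncomputable def cycleIso : cycleGraph 4 ≃g CommutingGraph C4Semigroup where
  toEquiv := Equiv.ofBijective (fun i => ⟨cycleVertex i, cycleVertex_not_mem_center i⟩) (by decide)
  map_rel_iff' := by decide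

theorem mem_center_iff_eq_mul (x : C4Semigroup) :
    x ∈ Set.center C4Semigroup ↔ x = cycleVertex 0 * cycleVertex 1 := by
  revert x
  decide

theorem closure_nonCentral_eq_top :
    Subsemigroup.closure
      (({x | x ∉ Set.center C4Semigroup} : Finset C4Semigroup) : Set C4Semigroup) = ⊤ := by
  have hmem : ∀ x ∉ Set.center C4Semigroup, x ∈ Subsemigroup.closure
      (({x | x ∉ Set.center C4Semigroup} : Finset C4Semigroup) : Set C4Semigroup) :=
    fun x hx => Subsemigroup.subset_closure (Finset.mem_filter.2 ⟨Finset.mem_univ x, hx⟩)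
  refine (Subsemigroup.eq_top_iff' _).2 fun x => ?_
  by_cases hx : x ∈ Set.center C4Semigroup
  · rw [(mem_center_iff_eq_mul x).1 hx]
    exact mul_mem (hmem _ (cycleVertex_not_mem_center 0)) (hmem _ (cycleVertex_not_mem_center 1))
  · exact hmem x hx

end C4Semigroup

theorem rank_of_C4 :
    (∀ (S : Type) (inst : Semigroup S),
      Nonempty (@CommutingGraph S inst ≃g SimpleGraph.cycleGraph 4) →
      ∀ gens : Finset S, Subsemigroup.closure (gens : Set S) = ⊤ →
        4 ≤ gens.card) ∧
    ∃ (S : Type) (inst : Semigroup S) (gens : Finset S),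
      gens.card = 4 ∧ Subsemigroup.closure (gens : Set S) = ⊤ ∧
      Nonempty (@CommutingGraph S inst ≃g SimpleGraph.cycleGraph 4) :=
  ⟨fun _ _ ⟨e⟩ _ hgens => CommutingGraph.four_le_card_of_closure_eq_top e hgens,
    C4Semigroup, inferInstance, ({x | x ∉ Set.center C4Semigroup} : Finset C4Semigroup),
    by decide, C4Semigroup.closure_nonCentral_eq_top, ⟨C4Semigroup.cycleIso.symm⟩⟩
end
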